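/- arXiv:1512.05302 — 2 statements merged into one kernel-verified Lean document; each statement's English description precedes it below -/
import Mathlib

section
/- If v_i and v_j are adjacent internal vertices of an unrooted binary phylogenetic tree T, then the union of their representative sets of taxa has cardinality exactly 4, i.e., |RST(v_i) ∪ RST(v_j)| = 4. -/
/-!
Removing the edge `vi vj` splits the tree into a `vi`-side and a `vj`-side. By pigeonhole over
the three branches at `vi`, some `a ∈ RST(vi)` lies on the `vj`-side, and the tie-breaking rule
puts it in `RST(vj)`; symmetrically some `b ∈ RST(vj)` on the `vi`-side lies in `RST(vi)`, and
`a ≠ b` since the sides are disjoint. Any common representative `c` lies on one side, where it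
shares a branch with `a` (at `vi`) or with `b` (at `vj`), so `c ∈ {a, b}`. Hence
`|RST(vi) ∩ RST(vj)| = 2` and the union has `3 + 3 - 2 = 4` elements.
-/

open SimpleGraph

variable {V : Type*}

/-- `x` and `y` are joined by a walk in `G` avoiding the vertex set `S`. -/
def Avoids (G : SimpleGraph V) (S : Set V) (x y : V) : Prop :=
  ∃ w : G.Walk x y, ∀ u ∈ w.support, u ∉ S

/-- `x` and `y` are joined by a walk in `G` avoiding the edge set `F`. -/
def AvoidsE (G : SimpleGraph V) (F : Set (Sym2 V)) (x y : V) : Prop :=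
  ∃ w : G.Walk x y, ∀ e ∈ w.edges, e ∉ F

/-- A leaf of a tree: a vertex with exactly one neighbour (degree one). -/
def IsLeaf (G : SimpleGraph V) (v : V) : Prop := ∃! u, G.Adj v u

/-- An internal vertex of degree three: exactly three distinct neighbours. -/
def IsDeg3 (G : SimpleGraph V) (v : V) : Prop :=
  ∃ a b c, a ≠ b ∧ a ≠ c ∧ b ≠ c ∧ G.Adj v a ∧ G.Adj v b ∧ G.Adj v c ∧
    ∀ u, G.Adj v u → u = a ∨ u = b ∨ u = c

/-- An unrooted binary phylogenetic tree: a tree all of whose vertices are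
leaves (degree 1) or internal vertices of degree 3. -/
def IsBinaryTree (G : SimpleGraph V) : Prop :=
  G.IsTree ∧ ∀ v, IsLeaf G v ∨ IsDeg3 G v

/-- The paper's `RST(v)` without the minimal-distance requirement: one leaf from each component
of `G - v`. -/
def IsSeparatedLeafTriple (G : SimpleGraph V) (v : V) (R : Set V) : Prop :=
  R.ncard = 3 ∧ (∀ x ∈ R, IsLeaf G x) ∧ ∀ x ∈ R, ∀ y ∈ R, x ≠ y → ¬ Avoids G {v} x y

variable {G : SimpleGraph V}

namespace Avoids

variable {S : Set V} {x y z : V}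

lemma symm (h : Avoids G S x y) : Avoids G S y x := by
  obtain ⟨w, hw⟩ := h
  exact ⟨w.reverse, fun u hu => hw u (by simpa using hu)⟩

lemma trans (hxy : Avoids G S x y) (hyz : Avoids G S y z) : Avoids G S x z := by
  obtain ⟨p, hp⟩ := hxy
  obtain ⟨q, hq⟩ := hyz
  refine ⟨p.append q, fun u hu => ?_⟩
  rcases Walk.mem_support_append_iff p q |>.mp hu with hu | hu
  exacts [hp u hu, hq u hu]

lemma exists_isPath (h : Avoids G S x y) :
    ∃ p : G.Walk x y, p.IsPath ∧ ∀ u ∈ p.support, u ∉ S := by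
  classical
  obtain ⟨w, hw⟩ := h
  exact ⟨w.bypass, w.bypass_isPath, fun u hu => hw u (w.support_bypass_subset_support hu)⟩

end Avoids

lemma IsLeaf.ne_of_isDeg3 {x v : V} (hx : IsLeaf G x) (hv : IsDeg3 G v) : x ≠ v := by
  rintro rfl
  obtain ⟨u, -, huniq⟩ := hx
  obtain ⟨a, b, -, hab, -, -, ha, hb, -⟩ := hv
  exact hab ((huniq a ha).trans (huniq b hb).symm)

lemma IsDeg3.ncard_neighborSet {v : V} (hv : IsDeg3 G v) : (G.neighborSet v).ncard = 3 := by
  obtain ⟨a, b, c, hab, hac, hbc, ha, hb, hc, hall⟩ := hv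
  have hN : G.neighborSet v = {a, b, c} := by
    ext u
    simp only [mem_neighborSet, Set.mem_insert_iff, Set.mem_singleton_iff]
    exact ⟨hall u, by rintro (rfl | rfl | rfl) <;> assumption⟩
  rw [hN, Set.ncard_eq_three]
  exact ⟨a, b, c, hab, hac, hbc, rfl⟩

lemma exists_adj_avoids (hc : G.Connected) {x v : V} (hxv : x ≠ v) :
    ∃ u, G.Adj v u ∧ Avoids G {v} x u := by
  classical
  obtain ⟨w⟩ := hc.preconnected v x
  obtain ⟨u, hvu, q, hq⟩ := Walk.not_nil_iff.mp (Walk.not_nil_of_ne hxv.symm : ¬ w.bypass.Nil)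
  have hvq : v ∉ q.support := by
    have hp := w.bypass_isPath
    rw [hq, Walk.cons_isPath_iff] at hp
    exact hp.2
  exact ⟨u, hvu, q.reverse, fun t ht (htv : t = v) => hvq (by simpa [htv] using ht)⟩

/-- Cut a path from `c` to `vi` at its first visit to `vj`, if there is one. -/
lemma avoids_or_avoids (hc : G.Connected) {c vi vj : V} (hne : vi ≠ vj) :
    Avoids G {vi} c vj ∨ Avoids G {vj} c vi := by
  classical
  obtain ⟨w⟩ := hc.preconnected c vi
  by_cases hvj : vj ∈ w.bypass.support
  · refine .inl ⟨w.bypass.takeUntil vj hvj, fun u hu (hui : u = vi) => ?_⟩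
    exact Walk.endpoint_notMem_support_takeUntil w.bypass_isPath hvj hne (hui ▸ hu)
  · exact .inr ⟨w.bypass, fun u hu (huj : u = vj) => hvj (huj ▸ hu)⟩

/-- Otherwise the path from `a` to `vi` avoiding `vj` would, by uniqueness of paths in a tree,
be the path from `a` to `vj` avoiding `vi` followed by the edge `vj vi`, which visits `vj`. -/
lemma not_avoids_and_avoids (hT : G.IsTree) {vi vj a : V} (hadj : G.Adj vi vj)
    (hi : Avoids G {vi} a vj) (hj : Avoids G {vj} a vi) : False := by
  obtain ⟨q, hq, hqi⟩ := hi.exists_isPath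
  obtain ⟨p, hp, hpj⟩ := hj.exists_isPath
  have hq' : (q.concat hadj.symm).IsPath := hq.concat (fun h => hqi vi h rfl) hadj.symm
  have hpq : p = q.concat hadj.symm :=
    congrArg Subtype.val ((hT.isAcyclic.subsingleton_path a vi).elim ⟨p, hp⟩ ⟨_, hq'⟩)
  refine hpj vj ?_ rfl
  rw [hpq, Walk.support_concat]
  exact List.mem_append_left _ q.end_mem_support

/-- Pigeonhole: the three members of `R` reach three different neighbours of `v` avoiding `v`,
and only two neighbours differ from `w`. -/
lemma IsSeparatedLeafTriple.exists_mem_avoids {v w : V} {R : Set V}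
    (hR : IsSeparatedLeafTriple G v R) (hc : G.Connected) (hv : IsDeg3 G v) (hvw : G.Adj v w) :
    ∃ a ∈ R, Avoids G {v} a w := by
  obtain ⟨hcard, hleaf, hsep⟩ := hR
  by_contra! hnot
  choose! f hfadj hfav using fun x (hx : x ∈ R) =>
    exists_adj_avoids hc ((hleaf x hx).ne_of_isDeg3 hv)
  have hmaps : ∀ x ∈ R, f x ∈ G.neighborSet v \ {w} := fun x hx =>
    ⟨hfadj x hx, fun (hfw : f x = w) => hnot x hx (hfw ▸ hfav x hx)⟩
  have hinj : Set.InjOn f R := fun x hx y hy hxy => by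
    by_contra hne
    exact hsep x hx y hy hne ((hfav x hx).trans (hxy ▸ hfav y hy).symm)
  have hN := hv.ncard_neighborSet
  have hfin : (G.neighborSet v \ {w}).Finite :=
    (Set.finite_of_ncard_pos (by omega)).sdiff
  have hle := Set.ncard_le_ncard_of_injOn f hmaps hinj hfin
  rw [Set.ncard_sdiff_singleton_of_mem (show w ∈ G.neighborSet v from hvw), hN] at hle
  omega

lemma inter_subset_pair (hc : G.Connected) {vi vj a b : V} (hne : vi ≠ vj)
    {R S : Set V} (hR : ∀ x ∈ R, ∀ y ∈ R, x ≠ y → ¬ Avoids G {vi} x y)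
    (hS : ∀ x ∈ S, ∀ y ∈ S, x ≠ y → ¬ Avoids G {vj} x y)
    (ha : a ∈ R) (hai : Avoids G {vi} a vj) (hb : b ∈ S) (hbj : Avoids G {vj} b vi) :
    R ∩ S ⊆ {a, b} := by
  rintro c ⟨hcR, hcS⟩
  by_contra hcab
  simp only [Set.mem_insert_iff, Set.mem_singleton_iff, not_or] at hcab
  rcases avoids_or_avoids hc (c := c) hne with hci | hcj
  · exact hR c hcR a ha hcab.1 (hci.trans hai.symm)
  · exact hS c hcS b hb hcab.2 (hcj.trans hbj.symm)

theorem stmt6_general {V : Type*} (G : SimpleGraph V)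
    (hT : IsBinaryTree G) (RST : V → Set V)
    (h1 : ∀ v, IsDeg3 G v → (RST v).ncard = 3 ∧ (∀ x ∈ RST v, IsLeaf G x) ∧
      ∀ x ∈ RST v, ∀ y ∈ RST v, x ≠ y → ¬ Avoids G {v} x y)
    (h2 : ∀ v w, IsDeg3 G v → IsDeg3 G w → G.Adj v w →
      ∀ a ∈ RST v, Avoids G {v} a w → a ∈ RST w)
    (vi vj : V) (hi : IsDeg3 G vi) (hj : IsDeg3 G vj) (hadj : G.Adj vi vj) :
    (RST vi ∪ RST vj).ncard = 4 := by
  have hc := hT.1.connected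
  obtain ⟨hcardi, -, hsepi⟩ := h1 vi hi
  obtain ⟨hcardj, -, hsepj⟩ := h1 vj hj
  obtain ⟨a, haRi, hai⟩ := IsSeparatedLeafTriple.exists_mem_avoids (h1 vi hi) hc hi hadj
  obtain ⟨b, hbRj, hbj⟩ := IsSeparatedLeafTriple.exists_mem_avoids (h1 vj hj) hc hj hadj.symm
  have hab : a ≠ b := by
    rintro rfl
    exact not_avoids_and_avoids hT.1 hadj hai hbj
  have hinter : RST vi ∩ RST vj = {a, b} :=
    (inter_subset_pair hc hadj.ne hsepi hsepj haRi hai hbRj hbj).antisymm <|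
      Set.insert_subset ⟨haRi, h2 vi vj hi hj hadj a haRi hai⟩
        (Set.singleton_subset_iff.2 ⟨h2 vj vi hj hi hadj.symm b hbRj hbj, hbRj⟩)
  have hcard := Set.ncard_union_add_ncard_inter (RST vi) (RST vj)
    (Set.finite_of_ncard_pos (by omega)) (Set.finite_of_ncard_pos (by omega))
  rw [hinter, Set.ncard_pair hab, hcardi, hcardj] at hcard
  omega

/-- Lemma 1 of the paper: if `vi` and `vj` are adjacent internal vertices of an
unrooted binary phylogenetic tree `T` and `RST` is a representative-set-of-taxa
assignment (each internal vertex gets a set of three leaves, one in each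
connected component of `T − v`, satisfying the tie-breaking rule that for
adjacent internal vertices the representative lying on the other vertex's side
belongs to the other vertex's set), then `|RST(vi) ∪ RST(vj)| = 4`. -/
theorem stmt6 {V : Type*} [Fintype V] (G : SimpleGraph V)
    (hT : IsBinaryTree G) (RST : V → Set V)
    (h1 : ∀ v, IsDeg3 G v → (RST v).ncard = 3 ∧ (∀ x ∈ RST v, IsLeaf G x) ∧
      ∀ x ∈ RST v, ∀ y ∈ RST v, x ≠ y → ¬ Avoids G {v} x y)
    (h2 : ∀ v w, IsDeg3 G v → IsDeg3 G w → G.Adj v w →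
      ∀ a ∈ RST v, Avoids G {v} a w → a ∈ RST w)
    (vi vj : V) (hi : IsDeg3 G vi) (hj : IsDeg3 G vj) (hadj : G.Adj vi vj) :
    (RST vi ∪ RST vj).ncard = 4 :=
  stmt6_general G hT RST h1 h2 vi vj hi hj hadj
end

section
/- Let T be an unrooted binary phylogenetic tree and let q_i, q_j be efficient quartets of T that distinguish adjacent internal edges e_i and e_j, respectively. Then |supp(q_i) ∪ supp(q_j)| = 5. -/
open SimpleGraph

variable {V : Type*}

lemma avoids_of_not_avoids {G : SimpleGraph V} (hc : G.Connected) {u v a : V} (huv : u ≠ v)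
    (h : ¬ Avoids G {u} a v) : Avoids G {v} a u := by
  classical
  obtain ⟨p0⟩ := hc a v
  set p := p0.toPath with hp
  have hpath : (p : G.Walk a v).IsPath := p.2
  have hu : u ∈ (p : G.Walk a v).support := by
    by_contra hn
    exact h ⟨p, fun x hx hxS => by simp at hxS; exact hn (hxS ▸ hx)⟩
  have hvnot : v ∉ ((p : G.Walk a v).takeUntil u hu).support := by
    intro hx
    have hspec := ((p : G.Walk a v).take_spec hu).symm
    have hnd := hpath.support_nodup
    rw [hspec, Walk.support_append] at hnd
    have hvtail : v ∈ ((p : G.Walk a v).dropUntil u hu).support.tail := by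
      have hv : v ∈ ((p : G.Walk a v).dropUntil u hu).support := Walk.end_mem_support _
      rw [Walk.support_eq_cons, List.mem_cons] at hv
      rcases hv with hv | hv
      · exact absurd hv.symm huv
      · exact hv
    exact (List.disjoint_of_nodup_append hnd) hx hvtail
  exact ⟨(p : G.Walk a v).takeUntil u hu, fun x hx hxS => by
    simp only [Set.mem_singleton_iff] at hxS; exact hvnot (hxS ▸ hx)⟩

lemma Avoids.symm' {G : SimpleGraph V} {S : Set V} {x y : V}
    (h : Avoids G S x y) : Avoids G S y x := by
  obtain ⟨p, hp⟩ := h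
  exact ⟨p.reverse, fun z hz => hp z (by rwa [Walk.support_reverse, List.mem_reverse] at hz)⟩

lemma Avoids.trans' {G : SimpleGraph V} {S : Set V} {x y z : V}
    (h1 : Avoids G S x y) (h2 : Avoids G S y z) : Avoids G S x z := by
  obtain ⟨p, hp⟩ := h1
  obtain ⟨q, hq⟩ := h2
  refine ⟨p.append q, fun a ha => ?_⟩
  rw [Walk.mem_support_append_iff] at ha
  exact ha.elim (hp a) (hq a)

lemma not_avoids_mid {G : SimpleGraph V} (hT : G.IsTree) {u v w : V}
    (huv : G.Adj u v) (hvw : G.Adj v w) (huw : u ≠ w) : ¬ Avoids G {v} u w := by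
  classical
  rintro ⟨p, hp⟩
  have hvp : v ∉ (p.toPath : G.Walk u w).support := fun hmem =>
    hp v (Walk.support_toPath_subset p hmem) rfl
  have hq : (Walk.cons huv (Walk.cons hvw Walk.nil) : G.Walk u w).IsPath := by
    simp [Walk.isPath_def, huv.ne, hvw.ne, huw]
  obtain ⟨pp, -, hun⟩ := hT.existsUnique_path u w
  have h1 := hun _ (p.toPath.2)
  have h2 := hun _ hq
  rw [← h2] at h1
  rw [h1] at hvp
  simp at hvp

/-- If `q_i` and `q_j` are efficient quartets of a binary phylogenetic tree `T`
distinguishing adjacent internal edges `{u,v}` and `{v,w}` respectively, then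
`|supp(q_i) ∪ supp(q_j)| = 5`. Here `far x y` is the two-element set of
representative taxa of the components of `T − x` not containing `y`, so that
the efficient quartet of the pair `(x, y)` has support `far x y ∪ far y x`;
`RST` is the representative-set-of-taxa assignment, satisfying
`|RST(x) ∪ RST(y)| = 4` for adjacent internal vertices. -/
theorem stmt9 {V : Type*} [Fintype V] (G : SimpleGraph V) (hT : IsBinaryTree G)
    (RST : V → Set V) (far : V → V → Set V)
    (hfar : ∀ x y, IsDeg3 G x → x ≠ y →
      (far x y).ncard = 2 ∧
      (∀ e ∈ far x y, IsLeaf G e ∧ ¬ Avoids G {x} e y) ∧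
      (∀ e ∈ far x y, ∀ f ∈ far x y, e ≠ f → ¬ Avoids G {x} e f))
    (hsub : ∀ x y, far x y ⊆ RST x)
    (hcard : ∀ x, IsDeg3 G x → (RST x).ncard = 3)
    (hlem : ∀ x y, IsDeg3 G x → IsDeg3 G y → G.Adj x y → (RST x ∪ RST y).ncard = 4)
    (u v w : V) (hu : IsDeg3 G u) (hv : IsDeg3 G v) (hw : IsDeg3 G w)
    (huv : G.Adj u v) (hvw : G.Adj v w) (huw : u ≠ w) :
    ((far u v ∪ far v u) ∪ (far v w ∪ far w v)).ncard = 5 := by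
  classical
  have hconn : G.Connected := hT.1.isConnected
  set A := far u v with hAdef
  set B := far v u with hBdef
  set C := far v w with hCdef
  set D := far w v with hDdef
  have hA := hfar u v hu huv.ne
  have hB := hfar v u hv huv.ne'
  have hC := hfar v w hv hvw.ne
  have hD := hfar w v hw hvw.ne'
  have hAB : Disjoint A B := by
    rw [Set.disjoint_left]
    intro a ha hb
    exact (hB.2.1 a hb).2 (avoids_of_not_avoids hconn huv.ne (hA.2.1 a ha).2)
  have hCD : Disjoint C D := by
    rw [Set.disjoint_left]
    intro a ha hb
    exact (hC.2.1 a ha).2 (avoids_of_not_avoids hconn hvw.ne' (hD.2.1 a hb).2)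
  have hAD : ∀ a, a ∈ A → a ∉ D := by
    intro a ha hd
    have h1 : Avoids G {v} a u := avoids_of_not_avoids hconn huv.ne (hA.2.1 a ha).2
    have h2 : Avoids G {v} a w := avoids_of_not_avoids hconn hvw.ne' (hD.2.1 a hd).2
    exact not_avoids_mid hT.1 huv hvw huw (h1.symm'.trans' h2)
  have hABc : (A ∪ B).ncard = 4 := by
    rw [Set.ncard_union_eq hAB, hA.1, hB.1]
  have hCDc : (C ∪ D).ncard = 4 := by
    rw [Set.ncard_union_eq hCD, hC.1, hD.1]
  have hABeq : A ∪ B = RST u ∪ RST v :=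
    Set.eq_of_subset_of_ncard_le (Set.union_subset_union (hsub u v) (hsub v u))
      (by rw [hlem u v hu hv huv, hABc])
  have hCDeq : C ∪ D = RST v ∪ RST w :=
    Set.eq_of_subset_of_ncard_le (Set.union_subset_union (hsub v w) (hsub w v))
      (by rw [hlem v w hv hw hvw, hCDc])
  have hIR : (A ∪ B) ∩ (C ∪ D) = RST v := by
    apply Set.Subset.antisymm
    · rintro x ⟨hx1, hx2⟩
      rcases hx1 with hx | hx
      · rcases hx2 with h | h
        · exact hsub v w h
        · exact absurd h (hAD x hx)
      · exact hsub v u hx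
    · intro x hx
      exact ⟨by rw [hABeq]; exact Or.inr hx, by rw [hCDeq]; exact Or.inl hx⟩
  have key := Set.ncard_union_add_ncard_inter (A ∪ B) (C ∪ D)
  rw [hIR, hcard v hv, hABc, hCDc] at key
  omega
end
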